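/- Every ℝ-word over X = {a, b} whose evaluation equals g₁ = ((1, 0), 0, 0) has length strictly greater than 1. (In particular, the element of Stoll length 1 represented by the horizontal segment to (1,0) is not represented by any ℝ-word of length 1.) -/
import Mathlib


noncomputable section

/-- The Engel Lie group `Ē`: underlying set `ℝ² × ℝ × ℝ`, with coordinates
`(x, y)` (endpoint), `A` (signed area) and `B` (the `y`-moment). -/
@[ext]
structure Engel where
  x : ℝ
  y : ℝ
  A : ℝ
  B : ℝ

namespace Engel

instance : Mul Engel :=
  ⟨fun g h =>
    ⟨g.x + h.x, g.y + h.y,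
     g.A + h.A + (g.x * h.y - g.y * h.x) / 2,
     g.B + h.B + g.y * h.A + (2 * g.y + h.y) * (g.x * h.y - g.y * h.x) / 6⟩⟩

instance : One Engel := ⟨⟨0, 0, 0, 0⟩⟩

instance : Inv Engel := ⟨fun g => ⟨-g.x, -g.y, -g.A, -g.B + g.y * g.A⟩⟩

@[simp] lemma mul_x (g h : Engel) : (g * h).x = g.x + h.x := rfl
@[simp] lemma mul_y (g h : Engel) : (g * h).y = g.y + h.y := rfl
@[simp] lemma mul_A (g h : Engel) :
    (g * h).A = g.A + h.A + (g.x * h.y - g.y * h.x) / 2 := rfl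
@[simp] lemma mul_B (g h : Engel) :
    (g * h).B = g.B + h.B + g.y * h.A
      + (2 * g.y + h.y) * (g.x * h.y - g.y * h.x) / 6 := rfl
@[simp] lemma one_x : (1 : Engel).x = 0 := rfl
@[simp] lemma one_y : (1 : Engel).y = 0 := rfl
@[simp] lemma one_A : (1 : Engel).A = 0 := rfl
@[simp] lemma one_B : (1 : Engel).B = 0 := rfl
@[simp] lemma inv_x (g : Engel) : g⁻¹.x = -g.x := rfl
@[simp] lemma inv_y (g : Engel) : g⁻¹.y = -g.y := rfl
@[simp] lemma inv_A (g : Engel) : g⁻¹.A = -g.A := rfl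
@[simp] lemma inv_B (g : Engel) : g⁻¹.B = -g.B + g.y * g.A := rfl

instance : Group Engel where
  mul_assoc a b c := by ext <;> simp <;> ring
  one_mul a := by ext <;> simp
  mul_one a := by ext <;> simp
  inv_mul_cancel a := by
    ext <;>
      simp only [mul_x, mul_y, mul_A, mul_B, inv_x, inv_y, inv_A, inv_B,
        one_x, one_y, one_A, one_B] <;> ring

/-- `a^t`: the straight segment from `(0,0)` to `(t,t)`. -/
def aPow (t : ℝ) : Engel := ⟨t, t, 0, 0⟩

/-- `b^t`: the straight segment from `(0,0)` to `(t,-t)`. -/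
def bPow (t : ℝ) : Engel := ⟨t, -t, 0, 0⟩

end Engel

namespace Engel

/-- An ℝ-word over `X = {a, b}` is a finite sequence of pairs `(xᵢ, tᵢ)` with
`xᵢ ∈ {a, b}` (encoded as `Bool`: `true ↦ a`, `false ↦ b`) and `tᵢ ∈ ℝ`.
Its evaluation is the product `x₁^{t₁}·…·x_k^{t_k}` in `Ē`. -/
def wordEval (w : List (Bool × ℝ)) : Engel :=
  (w.map fun p => if p.1 then aPow p.2 else bPow p.2).prod

/-- The length `ℓ(w) = Σᵢ |tᵢ|` of an ℝ-word. -/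
def wordLen (w : List (Bool × ℝ)) : ℝ := (w.map fun p => |p.2|).sum

end Engel

namespace Engel

/-- The sign of a letter: `a ↦ 1`, `b ↦ -1`. -/
def eps (p : Bool × ℝ) : ℝ := if p.1 then 1 else -1

/-- Total horizontal displacement `Σ tᵢ`. -/
def Xw (w : List (Bool × ℝ)) : ℝ := (w.map fun p => p.2).sum

/-- Total vertical displacement `Σ εᵢ tᵢ`. -/
def Yw (w : List (Bool × ℝ)) : ℝ := (w.map fun p => eps p * p.2).sum

/-- The "integral" `∫ y dx` along the piecewise-linear path of the word. -/
def S1 : List (Bool × ℝ) → ℝ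
  | [] => 0
  | p :: w => eps p * p.2 ^ 2 / 2 + S1 w + eps p * p.2 * Xw w

/-- The "integral" `∫ y² dx` along the piecewise-linear path of the word. -/
def S2 : List (Bool × ℝ) → ℝ
  | [] => 0
  | p :: w => p.2 ^ 3 / 3 + S2 w + 2 * eps p * p.2 * S1 w + p.2 ^ 2 * Xw w

@[simp] lemma Xw_nil : Xw ([] : List (Bool × ℝ)) = 0 := rfl
@[simp] lemma Xw_cons (p : Bool × ℝ) (w : List (Bool × ℝ)) :
    Xw (p :: w) = p.2 + Xw w := rfl
@[simp] lemma Yw_nil : Yw ([] : List (Bool × ℝ)) = 0 := rfl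
@[simp] lemma Yw_cons (p : Bool × ℝ) (w : List (Bool × ℝ)) :
    Yw (p :: w) = eps p * p.2 + Yw w := rfl
@[simp] lemma S1_nil : S1 ([] : List (Bool × ℝ)) = 0 := rfl
@[simp] lemma S1_cons (p : Bool × ℝ) (w : List (Bool × ℝ)) :
    S1 (p :: w) = eps p * p.2 ^ 2 / 2 + S1 w + eps p * p.2 * Xw w := rfl
@[simp] lemma S2_nil : S2 ([] : List (Bool × ℝ)) = 0 := rfl
@[simp] lemma S2_cons (p : Bool × ℝ) (w : List (Bool × ℝ)) :
    S2 (p :: w) = p.2 ^ 3 / 3 + S2 w + 2 * eps p * p.2 * S1 w + p.2 ^ 2 * Xw w := rfl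

@[simp] lemma wordEval_nil : wordEval ([] : List (Bool × ℝ)) = 1 := rfl

lemma wordEval_cons (p : Bool × ℝ) (w : List (Bool × ℝ)) :
    wordEval (p :: w) = (if p.1 then aPow p.2 else bPow p.2) * wordEval w := by
  simp [wordEval]

@[simp] lemma wordLen_nil : wordLen ([] : List (Bool × ℝ)) = 0 := rfl
@[simp] lemma wordLen_cons (p : Bool × ℝ) (w : List (Bool × ℝ)) :
    wordLen (p :: w) = |p.2| + wordLen w := rfl

/-- Explicit formula for the evaluation of a word. -/
lemma eval_spec (w : List (Bool × ℝ)) :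
    wordEval w = ⟨Xw w, Yw w, -S1 w + Xw w * Yw w / 2,
      -(S2 w) / 2 + Yw w ^ 2 * Xw w / 6⟩ := by
  induction w with
  | nil => ext <;> simp
  | cons p w ih =>
    obtain ⟨b, t⟩ := p
    rw [wordEval_cons, ih]
    cases b <;>
      · ext <;> simp [aPow, bPow, eps] <;> ring

lemma S2_shift_nonneg (w : List (Bool × ℝ)) (hw : ∀ p ∈ w, 0 ≤ p.2) (c : ℝ) :
    0 ≤ S2 w + 2 * c * S1 w + c ^ 2 * Xw w := by
  induction w generalizing c with
  | nil => simp
  | cons p w ih =>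
    have ht : 0 ≤ p.2 := hw p (by simp)
    have h := ih (fun q hq => hw q (by simp [hq])) (c + eps p * p.2)
    have hpos : 0 ≤ p.2 * ((c + eps p * p.2 / 2) ^ 2 + p.2 ^ 2 / 12) := by positivity
    have he : eps p = 1 ∨ eps p = -1 := by
      unfold eps; split <;> simp
    simp only [S2_cons, S1_cons, Xw_cons]
    rcases he with he | he <;> rw [he] at h hpos ⊢ <;> nlinarith [h, hpos]

lemma S2_pos (w : List (Bool × ℝ)) (hw : ∀ p ∈ w, 0 ≤ p.2) (hx : 0 < Xw w) (c : ℝ) :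
    0 < S2 w + 2 * c * S1 w + c ^ 2 * Xw w := by
  induction w generalizing c with
  | nil => simp at hx
  | cons p w ih =>
    have ht : 0 ≤ p.2 := hw p (by simp)
    have hw' : ∀ q ∈ w, 0 ≤ q.2 := fun q hq => hw q (by simp [hq])
    have he : eps p = 1 ∨ eps p = -1 := by
      unfold eps; split <;> simp
    rcases eq_or_lt_of_le ht with ht0 | ht0
    · have hx' : 0 < Xw w := by
        have := hx; rw [Xw_cons, ← ht0] at this; linarith
      have h := ih hw' hx' c
      simp only [S2_cons, S1_cons, Xw_cons, ← ht0]
      nlinarith [h]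
    · have h := S2_shift_nonneg w hw' (c + eps p * p.2)
      have hpos : 0 < p.2 * ((c + eps p * p.2 / 2) ^ 2 + p.2 ^ 2 / 12) := by positivity
      simp only [S2_cons, S1_cons, Xw_cons]
      rcases he with he | he <;> rw [he] at h hpos ⊢ <;> nlinarith [h, hpos]

lemma len_nonneg_of_le (w : List (Bool × ℝ)) (h : wordLen w ≤ Xw w) :
    ∀ p ∈ w, 0 ≤ p.2 := by
  induction w with
  | nil => simp
  | cons p w ih =>
    have hXle : Xw w ≤ wordLen w := by
      clear h ih
      induction w with
      | nil => simp
      | cons q w ih => simp only [Xw_cons, wordLen_cons]; have := le_abs_self q.2; linarith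
    have habs := le_abs_self p.2
    have hp : 0 ≤ p.2 := by
      simp only [wordLen_cons, Xw_cons] at h
      have : |p.2| ≤ p.2 := by linarith
      linarith [abs_nonneg p.2, this]
    intro q hq
    rcases List.mem_cons.mp hq with rfl | hq
    · exact hp
    · refine ih ?_ q hq
      simp only [wordLen_cons, Xw_cons] at h
      have : |p.2| ≤ p.2 := by linarith
      linarith

/-- Every ℝ-word over `X = {a, b}` whose evaluation equals `g₁ = ((1, 0), 0, 0)`
has length strictly greater than `1`: the element of Stoll length `1` represented
by the horizontal segment to `(1, 0)` is not represented by any ℝ-word of length `1`. -/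
theorem no_length_one_word_for_g1 (w : List (Bool × ℝ))
    (hw : wordEval w = ⟨1, 0, 0, 0⟩) : 1 < wordLen w := by
  have hs := (eval_spec w).symm.trans hw
  rw [Engel.mk.injEq] at hs
  obtain ⟨h1, h2, _h3, h4⟩ := hs
  rw [h2] at h4
  have hS2 : S2 w = 0 := by norm_num at h4; linarith
  by_contra hlen
  push_neg at hlen
  have hle : wordLen w ≤ Xw w := by rw [h1]; exact hlen
  have hpos := S2_pos w (len_nonneg_of_le w hle) (by rw [h1]; norm_num) 0
  simp only [mul_zero, zero_mul, ne_eq, OfNat.ofNat_ne_zero, not_false_eq_true,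
    zero_pow, add_zero] at hpos
  nlinarith [hpos, hS2]

end Engel
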